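/- Let α ∈ ℝ with |α| ≥ 1, b' < b, and ξ₁, ξ₂ : [b', b] → ℂ continuous. With ζ₁, ζ₂ defined as the explicit integral solutions of the system ξ₁ = iαζ₁ + ζ₂', ξ₂ = ζ₁' − iαζ₂ with ζ₁(b) = ζ₂(b) = 0, there exists a constant C (independent of α, ξ₁, ξ₂) such that |ζ_j(y)| ≤ C·(‖ξ₁‖_{L^∞(b',b)} + ‖ξ₂‖_{L^∞(b',b)})·(1/|α|)·e^{|α|(b−y)} for all y ∈ [b', b] and j = 1, 2. -/

import Mathlib

/-! After the prefactor `e^{α(y-b)}` is moved inside the integrals, every integrand is bounded by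
the sup norm of the data times `e^{|α| d(t)}`, with `d(t)` the distance from `t` to one endpoint of
`[y, b]`; such a weight integrates to at most `e^{|α|(b-y)} / |α|`. The remaining coefficients
are polynomials in `b - y ≤ b - b'`, which go into `C`. -/

open Complex intervalIntegral

/-- The first potential function of the modewise Helmholtz decomposition. -/
noncomputable def zeta1 (α b : ℝ) (ξ₁ ξ₂ : ℝ → ℂ) (y : ℝ) : ℂ :=
  -(Complex.I / 2) * Complex.exp ((α : ℂ) * (y - b))
      * ∫ t in y..b, Complex.exp (-(α : ℂ) * (t - b)) * ξ₁ t
    + (Complex.I / 2) * Complex.exp (-(α : ℂ) * (y - b))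
      * ∫ t in y..b, Complex.exp ((α : ℂ) * (t - b)) * ξ₁ t
    - (1 / 2) * Complex.exp ((α : ℂ) * (y - b))
      * ∫ t in y..b, Complex.exp (-(α : ℂ) * (t - b)) * ξ₂ t
    - (1 / 2) * Complex.exp (-(α : ℂ) * (y - b))
      * ∫ t in y..b, Complex.exp ((α : ℂ) * (t - b)) * ξ₂ t

/-- The second potential function of the modewise Helmholtz decomposition. -/
noncomputable def zeta2 (α b : ℝ) (ξ₁ ξ₂ : ℝ → ℂ) (y : ℝ) : ℂ :=
  -(1 / 2) * Complex.exp ((α : ℂ) * (y - b))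
      * ∫ t in y..b, Complex.exp (-(α : ℂ) * (t - b)) * ξ₁ t
    - (1 / 2) * Complex.exp (-(α : ℂ) * (y - b))
      * ∫ t in y..b, Complex.exp ((α : ℂ) * (t - b)) * ξ₁ t
    + (Complex.I / 2) * Complex.exp ((α : ℂ) * (y - b))
      * ∫ t in y..b, Complex.exp (-(α : ℂ) * (t - b)) * ξ₂ t
    - (Complex.I / 2) * Complex.exp (-(α : ℂ) * (y - b))
      * ∫ t in y..b, Complex.exp ((α : ℂ) * (t - b)) * ξ₂ t

lemma integral_exp_mul_sub (κ y b : ℝ) (hκ : κ ≠ 0) :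
    ∫ t in y..b, Real.exp (κ * (t - y)) = (Real.exp (κ * (b - y)) - 1) / κ := by
  simp_rw [mul_sub]
  rw [integral_comp_mul_sub (fun x => Real.exp x) hκ, integral_exp]
  simp [div_eq_inv_mul, mul_sub]

section ExponentialWeight

variable {f : ℝ → ℂ} {κ M y b : ℝ}

lemma norm_integral_le_of_norm_le_exp_from_left (hκ : 0 < κ) (hM : 0 ≤ M) (hyb : y ≤ b)
    (hf : ∀ t ∈ Set.Icc y b, ‖f t‖ ≤ M * Real.exp (κ * (t - y))) :
    ‖∫ t in y..b, f t‖ ≤ M * (Real.exp (κ * (b - y)) / κ) :=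
  calc ‖∫ t in y..b, f t‖ ≤ ∫ t in y..b, M * Real.exp (κ * (t - y)) :=
        norm_integral_le_of_norm_le hyb
          (.of_forall fun t ht => hf t (Set.Ioc_subset_Icc_self ht))
          ((by fun_prop : Continuous fun t => M * Real.exp (κ * (t - y))).intervalIntegrable _ _)
    _ = M * ((Real.exp (κ * (b - y)) - 1) / κ) := by
        rw [integral_const_mul, integral_exp_mul_sub κ y b hκ.ne']
    _ ≤ M * (Real.exp (κ * (b - y)) / κ) := by gcongr; linarith

lemma norm_integral_le_of_norm_le_exp_from_right (hκ : 0 < κ) (hM : 0 ≤ M) (hyb : y ≤ b)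
    (hf : ∀ t ∈ Set.Icc y b, ‖f t‖ ≤ M * Real.exp (κ * (b - t))) :
    ‖∫ t in y..b, f t‖ ≤ M * (Real.exp (κ * (b - y)) / κ) := by
  have h := norm_integral_le_of_norm_le_exp_from_left (f := fun t => f (b + y - t)) hκ hM hyb
    fun t ht => by
      simpa only [show b - (b + y - t) = t - y by ring] using
        hf (b + y - t) ⟨by linarith [ht.2], by linarith [ht.1]⟩
  simpa [integral_comp_sub_left] using h

end ExponentialWeight

lemma norm_cexp_ofReal_mul_sub_le (α s t : ℝ) :
    ‖cexp (α * (s - t))‖ ≤ Real.exp (|α| * |s - t|) := by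
  rw [norm_exp, ← abs_mul]
  exact Real.exp_le_exp.2 (by simpa using le_abs_self (α * (s - t)))

section ExponentialKernel

variable {α M y b : ℝ} {ξ : ℝ → ℂ}

lemma norm_integral_cexp_mul_le (hα : α ≠ 0) (hyb : y ≤ b)
    (hξ : ∀ t ∈ Set.Icc y b, ‖ξ t‖ ≤ M) :
    ‖∫ t in y..b, cexp (α * (t - b)) * ξ t‖ ≤ M * (Real.exp (|α| * (b - y)) / |α|) := by
  have hM : 0 ≤ M := (norm_nonneg _).trans (hξ y ⟨le_rfl, hyb⟩)
  refine norm_integral_le_of_norm_le_exp_from_right (abs_pos.2 hα) hM hyb fun t ht => ?_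
  rw [norm_mul, mul_comm M]
  have hexp := norm_cexp_ofReal_mul_sub_le α t b
  rw [abs_sub_comm, abs_of_nonneg (sub_nonneg.2 ht.2)] at hexp
  exact mul_le_mul hexp (hξ t ht) (norm_nonneg _) (Real.exp_nonneg _)

lemma norm_cexp_mul_integral_cexp_neg_mul_le (hα : α ≠ 0) (hyb : y ≤ b)
    (hξ : ∀ t ∈ Set.Icc y b, ‖ξ t‖ ≤ M) :
    ‖cexp (α * (y - b)) * ∫ t in y..b, cexp (-α * (t - b)) * ξ t‖
      ≤ M * (Real.exp (|α| * (b - y)) / |α|) := by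
  have hM : 0 ≤ M := (norm_nonneg _).trans (hξ y ⟨le_rfl, hyb⟩)
  have hcombine (t : ℝ) : cexp (α * (y - b)) * (cexp (-α * (t - b)) * ξ t)
      = cexp (α * (y - t)) * ξ t := by
    rw [← mul_assoc, ← Complex.exp_add]
    ring_nf
  rw [← integral_const_mul]
  simp_rw [hcombine]
  refine norm_integral_le_of_norm_le_exp_from_left (abs_pos.2 hα) hM hyb fun t ht => ?_
  rw [norm_mul, mul_comm M]
  have hexp := norm_cexp_ofReal_mul_sub_le α y t
  rw [abs_sub_comm, abs_of_nonneg (sub_nonneg.2 ht.1)] at hexp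
  exact mul_le_mul hexp (hξ t ht) (norm_nonneg _) (Real.exp_nonneg _)

lemma intervalIntegrable_cexp_mul (c : ℂ) (hξ : ContinuousOn ξ (Set.uIcc y b)) :
    IntervalIntegrable (fun t : ℝ => cexp (c * (t - b)) * ξ t) MeasureTheory.volume y b :=
  ((by fun_prop : Continuous fun t : ℝ => cexp (c * (t - b))).continuousOn.mul hξ)
    |>.intervalIntegrable

end ExponentialKernel

section Potentials

variable {α b y : ℝ} {ξ₁ ξ₂ : ℝ → ℂ}

/- Each `∫ t in y..b, …` in `zeta1` and `zeta2` extends to the end of the definition, so every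
later term enters the preceding integral as a constant; integrating these constants produces the
powers of `b - y`. -/
lemma zeta1_eq (hξ₁ : ContinuousOn ξ₁ (Set.uIcc y b)) (hξ₂ : ContinuousOn ξ₂ (Set.uIcc y b)) :
    zeta1 α b ξ₁ ξ₂ y =
      -I / 2 * (cexp (α * (y - b)) * ∫ t in y..b, cexp (-α * (t - b)) * ξ₁ t)
      + ((b - y : ℝ) : ℂ) / 4 * (∫ t in y..b, cexp (α * (t - b)) * ξ₁ t)
      + -1 * ((b - y : ℝ) : ℂ) ^ 2 / 8
        * (cexp (α * (y - b)) * ∫ t in y..b, cexp (-α * (t - b)) * ξ₂ t)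
      + ((b - y : ℝ) : ℂ) ^ 3 / 16 * ∫ t in y..b, cexp (α * (t - b)) * ξ₂ t := by
  rw [zeta1, integral_add (intervalIntegrable_cexp_mul _ hξ₁) intervalIntegrable_const,
    integral_sub (intervalIntegrable_cexp_mul _ hξ₁) intervalIntegrable_const,
    integral_sub (intervalIntegrable_cexp_mul _ hξ₂) intervalIntegrable_const]
  simp only [integral_const, Complex.real_smul, neg_mul (α : ℂ), Complex.exp_neg]
  field_simp
  ring_nf
  simp only [I_sq]
  ring

lemma zeta2_eq (hξ₁ : ContinuousOn ξ₁ (Set.uIcc y b)) (hξ₂ : ContinuousOn ξ₂ (Set.uIcc y b)) :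
    zeta2 α b ξ₁ ξ₂ y =
      -1 / 2 * (cexp (α * (y - b)) * ∫ t in y..b, cexp (-α * (t - b)) * ξ₁ t)
      + ((b - y : ℝ) : ℂ) / 4 * (∫ t in y..b, cexp (α * (t - b)) * ξ₁ t)
      + I * ((b - y : ℝ) : ℂ) ^ 2 / 8
        * (cexp (α * (y - b)) * ∫ t in y..b, cexp (-α * (t - b)) * ξ₂ t)
      + ((b - y : ℝ) : ℂ) ^ 3 / 16 * ∫ t in y..b, cexp (α * (t - b)) * ξ₂ t := by
  rw [zeta2, integral_sub (intervalIntegrable_cexp_mul _ hξ₁) intervalIntegrable_const,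
    integral_add (intervalIntegrable_cexp_mul _ hξ₁) intervalIntegrable_const,
    integral_sub (intervalIntegrable_cexp_mul _ hξ₂) intervalIntegrable_const]
  simp only [integral_const, Complex.real_smul, neg_mul (α : ℂ), Complex.exp_neg]
  field_simp
  ring_nf
  simp only [I_sq]
  ring

end Potentials

lemma norm_combination_le {a c u v w z : ℂ} {L M₁ M₂ K : ℝ} (ha : ‖a‖ = 1) (hc : ‖c‖ = 1)
    (hL : 0 ≤ L) (hu : ‖u‖ ≤ M₁ * K) (hv : ‖v‖ ≤ M₁ * K) (hw : ‖w‖ ≤ M₂ * K)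
    (hz : ‖z‖ ≤ M₂ * K) :
    ‖a / 2 * u + (L : ℂ) / 4 * v + c * (L : ℂ) ^ 2 / 8 * w + (L : ℂ) ^ 3 / 16 * z‖
      ≤ (1 / 2 + L / 4 + L ^ 2 / 8 + L ^ 3 / 16) * (M₁ + M₂) * K := by
  have h₁ : 0 ≤ M₁ * K := (norm_nonneg _).trans hu
  have h₂ : 0 ≤ M₂ * K := (norm_nonneg _).trans hz
  calc _ ≤ ‖a / 2 * u‖ + ‖(L : ℂ) / 4 * v‖ + ‖c * (L : ℂ) ^ 2 / 8 * w‖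
          + ‖(L : ℂ) ^ 3 / 16 * z‖ := norm_add₄_le
    _ = 1 / 2 * ‖u‖ + L / 4 * ‖v‖ + L ^ 2 / 8 * ‖w‖ + L ^ 3 / 16 * ‖z‖ := by
        simp [ha, hc, Complex.norm_real, abs_of_nonneg hL]
    _ ≤ 1 / 2 * (M₁ * K) + L / 4 * (M₁ * K) + L ^ 2 / 8 * (M₂ * K) + L ^ 3 / 16 * (M₂ * K) := by
        gcongr
    _ ≤ _ := by
        nlinarith [mul_nonneg h₁ hL, mul_nonneg h₂ hL, mul_nonneg (pow_nonneg hL 2) h₁,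
          mul_nonneg (pow_nonneg hL 3) h₁]

/-- Uniform bound for the potentials `ζ₁, ζ₂` in terms of the sup norms of the data. -/
theorem zeta_bound (b' b : ℝ) (hb : b' < b) :
    ∃ C > 0, ∀ (α : ℝ), 1 ≤ |α| → ∀ (ξ₁ ξ₂ : ℝ → ℂ) (M₁ M₂ : ℝ),
      ContinuousOn ξ₁ (Set.Icc b' b) → ContinuousOn ξ₂ (Set.Icc b' b) →
      (∀ t ∈ Set.Icc b' b, ‖ξ₁ t‖ ≤ M₁) → (∀ t ∈ Set.Icc b' b, ‖ξ₂ t‖ ≤ M₂) →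
      ∀ y ∈ Set.Icc b' b,
        ‖zeta1 α b ξ₁ ξ₂ y‖ ≤ C * (M₁ + M₂) * (1 / |α|) * Real.exp (|α| * (b - y)) ∧
        ‖zeta2 α b ξ₁ ξ₂ y‖ ≤ C * (M₁ + M₂) * (1 / |α|) * Real.exp (|α| * (b - y)) := by
  have hD : 0 < b - b' := sub_pos.2 hb
  refine ⟨1 / 2 + (b - b') / 4 + (b - b') ^ 2 / 8 + (b - b') ^ 3 / 16, by positivity, ?_⟩
  intro α hα ξ₁ ξ₂ M₁ M₂ hξ₁ hξ₂ hM₁ hM₂ y ⟨hb'y, hyb⟩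
  have hα₀ : α ≠ 0 := abs_pos.1 (one_pos.trans_le hα)
  have hsub : Set.Icc y b ⊆ Set.Icc b' b := Set.Icc_subset_Icc_left hb'y
  have hsub' : Set.uIcc y b ⊆ Set.Icc b' b := Set.uIcc_of_le hyb ▸ hsub
  have hM₁' := fun t ht => hM₁ t (hsub ht)
  have hM₂' := fun t ht => hM₂ t (hsub ht)
  have hM : 0 ≤ M₁ + M₂ :=
    add_nonneg ((norm_nonneg _).trans (hM₁ b ⟨hb.le, le_rfl⟩))
      ((norm_nonneg _).trans (hM₂ b ⟨hb.le, le_rfl⟩))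
  have hL : 0 ≤ b - y := sub_nonneg.2 hyb
  have hLD : b - y ≤ b - b' := by linarith
  have hcombination {a c : ℂ} (ha : ‖a‖ = 1) (hc : ‖c‖ = 1) :=
    norm_combination_le ha hc hL
      (norm_cexp_mul_integral_cexp_neg_mul_le hα₀ hyb hM₁') (norm_integral_cexp_mul_le hα₀ hyb hM₁')
      (norm_cexp_mul_integral_cexp_neg_mul_le hα₀ hyb hM₂') (norm_integral_cexp_mul_le hα₀ hyb hM₂')
  have hweaken (z : ℂ) (hz : ‖z‖ ≤ (1 / 2 + (b - y) / 4 + (b - y) ^ 2 / 8 + (b - y) ^ 3 / 16)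
      * (M₁ + M₂) * (Real.exp (|α| * (b - y)) / |α|)) :
      ‖z‖ ≤ (1 / 2 + (b - b') / 4 + (b - b') ^ 2 / 8 + (b - b') ^ 3 / 16) * (M₁ + M₂)
        * (1 / |α|) * Real.exp (|α| * (b - y)) :=
    calc ‖z‖ ≤ _ := hz
      _ ≤ (1 / 2 + (b - b') / 4 + (b - b') ^ 2 / 8 + (b - b') ^ 3 / 16) * (M₁ + M₂)
          * (Real.exp (|α| * (b - y)) / |α|) := by gcongr
      _ = _ := by ring
  rw [zeta1_eq (hξ₁.mono hsub') (hξ₂.mono hsub'), zeta2_eq (hξ₁.mono hsub') (hξ₂.mono hsub')]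
  exact ⟨hweaken _ (hcombination (by simp) (by simp)), hweaken _ (hcombination (by simp) (by simp))⟩
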